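/- Let 𝒴 = {y ∈ ℝⁿ : ‖y‖_∞ ≤ ρ, ‖y‖₁ ≤ n_t ρ} for ρ > 0 and integer 1 ≤ n_t ≤ n. Every extreme point of 𝒴 has exactly n_t coordinates equal to ±ρ and the rest equal to 0; consequently the number of extreme points is 2^{n_t} · C(n, n_t). -/

import Mathlib

/-!
If the ℓ¹-budget of an extreme point `y` were slack, some coordinate would lie strictly inside
`[-ρ, ρ]` (because `k ≤ n`) and could be pushed both ways. If two coordinates were strictly
between `0` and `ρ` in absolute value, ℓ¹-mass could be shifted between them in either direction.
So at most one coordinate is fractional; as `∑ |y i| = k ρ` and every other coordinate contributes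
`0` or `ρ`, that one is a multiple of `ρ` as well. Conversely, a vector with `k` entries `±ρ` and
zeros elsewhere is extreme: each `±ρ` is extreme in `[-ρ, ρ]`, and these entries exhaust the
budget, which forces zeros elsewhere. Choosing the support and the signs gives `2 ^ k * C(n, k)`.
-/

open Finset

theorem notMem_extremePoints_of_add_mem_of_sub_mem {𝕜 E : Type*} [Field 𝕜] [LinearOrder 𝕜]
    [IsStrictOrderedRing 𝕜] [AddCommGroup E] [Module 𝕜 E] {A : Set E} {x d : E} (hd : d ≠ 0)
    (h₁ : x + d ∈ A) (h₂ : x - d ∈ A) : x ∉ A.extremePoints 𝕜 := fun hx ↦ by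
  have hmid : x ∈ openSegment 𝕜 (x + d) (x - d) :=
    ⟨1 / 2, 1 / 2, by norm_num, by norm_num, by norm_num, by module⟩
  exact hd (by simpa using hx.2 h₁ h₂ hmid)

theorem abs_add_mul_sign {α : Type*} [CommRing α] [LinearOrder α] [IsStrictOrderedRing α] {a c : α}
    (ha : a ≠ 0) (hc : -|a| ≤ c) : |a + c * SignType.sign a| = |a| + c := by
  rcases ha.lt_or_gt with h | h
  · rw [abs_of_neg h] at hc ⊢
    rw [sign_neg h, SignType.coe_neg_one, mul_neg_one, abs_of_nonpos (by linarith)]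
    ring
  · rw [abs_of_pos h] at hc ⊢
    rw [sign_pos h, SignType.coe_one, mul_one, abs_of_nonneg (by linarith)]

section BudgetSet

variable {ι : Type*}

theorem sum_abs_eq_card_mul {ρ : ℝ} {y : ι → ℝ} (s : Finset ι)
    (h : ∀ i ∈ s, |y i| = ρ ∨ y i = 0) : ∑ i ∈ s, |y i| = #{i ∈ s | y i ≠ 0} * ρ := by
  have hsupp : ∀ i ∈ {i ∈ s | y i ≠ 0}, |y i| = ρ := fun i hi ↦
    (h i (mem_filter.1 hi).1).resolve_right (mem_filter.1 hi).2
  have hzero : ∀ i ∈ {i ∈ s | ¬y i ≠ 0}, |y i| = 0 := fun i hi ↦ by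
    simp [not_not.1 (mem_filter.1 hi).2]
  rw [← sum_filter_add_sum_filter_not s (fun i ↦ y i ≠ 0), sum_congr rfl hsupp,
    sum_congr rfl hzero, sum_const, nsmul_eq_mul, sum_const_zero, add_zero]

variable [Fintype ι]

variable (ι) in
def budgetSet (k : ℕ) (ρ : ℝ) : Set (ι → ℝ) :=
  {y | (∀ i, |y i| ≤ ρ) ∧ ∑ i, |y i| ≤ k * ρ}

theorem add_mem_budgetSet_and_sub_mem {k : ℕ} {ρ : ℝ} {y d : ι → ℝ}
    (hle : ∀ i, |y i| + |d i| ≤ ρ) (hsum : ∑ i, (|y i| + |d i|) ≤ k * ρ) :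
    y + d ∈ budgetSet ι k ρ ∧ y - d ∈ budgetSet ι k ρ := by
  have key : ∀ e : ι → ℝ, (∀ i, |e i| = |d i|) → y + e ∈ budgetSet ι k ρ := fun e he ↦
    ⟨fun i ↦ (abs_add_le _ _).trans (he i ▸ hle i),
      (sum_le_sum fun i _ ↦ (abs_add_le _ _).trans_eq (by rw [he i])).trans hsum⟩
  exact ⟨key d fun _ ↦ rfl, sub_eq_add_neg y d ▸ key (-d) fun _ ↦ abs_neg _⟩

theorem notMem_extremePoints_of_sum_abs_lt {k : ℕ} {ρ : ℝ} {y : ι → ℝ}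
    (hk : k ≤ Fintype.card ι) (hρ : 0 ≤ ρ) (hy : y ∈ budgetSet ι k ρ)
    (hlt : ∑ i, |y i| < k * ρ) : y ∉ (budgetSet ι k ρ).extremePoints ℝ := by
  classical
  obtain ⟨i, hi⟩ : ∃ i, |y i| < ρ := by
    by_contra! hall
    have : Fintype.card ι * ρ ≤ ∑ i, |y i| := by
      simpa using card_nsmul_le_sum univ (fun i ↦ |y i|) ρ fun i _ ↦ hall i
    nlinarith [mul_le_mul_of_nonneg_right (Nat.cast_le.2 hk : (k : ℝ) ≤ _) hρ]
  set ε := min (ρ - |y i|) (k * ρ - ∑ j, |y j|)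
  have hε : 0 < ε := lt_min (by linarith) (by linarith)
  set d : ι → ℝ := Pi.single i ε with hd
  have hle : ∀ j, |y j| + |d j| ≤ ρ := fun j ↦ by
    rcases eq_or_ne j i with rfl | hj
    · simpa [hd, abs_of_pos hε] using le_sub_iff_add_le'.1 (min_le_left _ _)
    · simpa [hd, hj] using hy.1 j
  have hsum : ∑ j, (|y j| + |d j|) ≤ k * ρ := by
    have hdsum : ∑ j, |d j| = ε := by simp [hd, Pi.single_apply, apply_ite, abs_of_pos hε]
    rw [sum_add_distrib, hdsum]
    linarith [min_le_right (ρ - |y i|) (k * ρ - ∑ j, |y j|)]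
  obtain ⟨hadd, hsub⟩ := add_mem_budgetSet_and_sub_mem hle hsum
  exact notMem_extremePoints_of_add_mem_of_sub_mem (by simpa [hd] using hε.ne') hadd hsub

theorem notMem_extremePoints_of_two_fractional {k : ℕ} {ρ : ℝ} {y : ι → ℝ} {i j : ι}
    (hij : i ≠ j) (hy : y ∈ budgetSet ι k ρ) (hi0 : y i ≠ 0) (hiρ : |y i| < ρ)
    (hj0 : y j ≠ 0) (hjρ : |y j| < ρ) : y ∉ (budgetSet ι k ρ).extremePoints ℝ := by
  classical
  set ε := min (min |y i| |y j|) (min (ρ - |y i|) (ρ - |y j|))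
  have hε : 0 < ε := lt_min (lt_min (abs_pos.2 hi0) (abs_pos.2 hj0))
    (lt_min (by linarith) (by linarith))
  have hεi : ε ≤ |y i| := (min_le_left _ _).trans (min_le_left _ _)
  have hεj : ε ≤ |y j| := (min_le_left _ _).trans (min_le_right _ _)
  have hεi' : ε ≤ ρ - |y i| := (min_le_right _ _).trans (min_le_left _ _)
  have hεj' : ε ≤ ρ - |y j| := (min_le_right _ _).trans (min_le_right _ _)
  -- `y + c • v` moves ℓ¹-mass `c` from coordinate `j` to coordinate `i`; `w` is the change of `|y|`
  set v : ι → ℝ := Pi.single i (SignType.sign (y i) : ℝ) - Pi.single j (SignType.sign (y j) : ℝ)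
    with hv
  set w : ι → ℝ := Pi.single i 1 - Pi.single j 1 with hw
  have hmem : ∀ c, |c| ≤ ε → y + c • v ∈ budgetSet ι k ρ := fun c hc ↦ by
    obtain ⟨hc₁, hc₂⟩ := abs_le.1 hc
    have hcoord : ∀ l, |(y + c • v) l| = |y l| + c * w l := fun l ↦ by
      rcases eq_or_ne l i with rfl | hli
      · simpa [hv, hw, hij] using abs_add_mul_sign hi0 (by linarith : -|y l| ≤ c)
      rcases eq_or_ne l j with rfl | hlj
      · simpa [hv, hw, hli, ← sub_eq_add_neg] using
          abs_add_mul_sign hj0 (by linarith : -|y l| ≤ -c)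
      · simp [hv, hw, hli, hlj]
    refine ⟨fun l ↦ ?_, ?_⟩
    · rw [hcoord]
      rcases eq_or_ne l i with rfl | hli
      · simp [hw, hij]; linarith
      rcases eq_or_ne l j with rfl | hlj
      · simp [hw, hli]; linarith
      · simpa [hw, hli, hlj] using hy.1 l
    · refine (sum_congr rfl fun l _ ↦ hcoord l).trans_le ?_
      simpa [sum_add_distrib, ← mul_sum, hw, sum_sub_distrib] using hy.2
  have hv0 : ε • v ≠ 0 := fun h ↦ hi0 <| by
    have hsign : (SignType.sign (y i) : ℝ) = 0 := by simpa [hv, hij, hε.ne'] using congrFun h i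
    rw [← abs_mul_sign (y i), hsign, mul_zero]
  refine notMem_extremePoints_of_add_mem_of_sub_mem hv0 (hmem ε ?_) ?_
  · rw [abs_of_pos hε]
  · simpa [sub_eq_add_neg, ← neg_smul] using hmem (-ε) (by rw [abs_neg, abs_of_pos hε])

theorem abs_eq_or_eq_zero_of_sum_abs_eq {k : ℕ} {ρ : ℝ} {y : ι → ℝ} {i : ι} (hρ : 0 < ρ)
    (hy : y ∈ budgetSet ι k ρ) (hsum : ∑ l, |y l| = k * ρ)
    (hrest : ∀ l ≠ i, |y l| = ρ ∨ y l = 0) : |y i| = ρ ∨ y i = 0 := by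
  classical
  set m := #{l ∈ univ.erase i | y l ≠ 0}
  have hyi : |y i| = ((k - m : ℤ) : ℝ) * ρ := by
    have := add_sum_erase univ (fun l ↦ |y l|) (mem_univ i)
    rw [sum_abs_eq_card_mul _ fun l hl ↦ hrest l (ne_of_mem_erase hl)] at this
    push_cast
    linarith
  have h₀ : (0 : ℝ) ≤ ((k - m : ℤ) : ℝ) := nonneg_of_mul_nonneg_left (hyi ▸ abs_nonneg _) hρ
  have h₁ : ((k - m : ℤ) : ℝ) ≤ 1 :=
    le_of_mul_le_mul_right (by rw [one_mul, ← hyi]; exact hy.1 i) hρ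
  have : (k - m : ℤ) = 0 ∨ (k - m : ℤ) = 1 := by
    have := Int.cast_nonneg_iff.1 h₀
    have : k - (m : ℤ) ≤ 1 := by exact_mod_cast h₁
    omega
  rcases this with h | h
  · right; simpa [h] using hyi
  · left; simpa [h] using hyi

theorem abs_eq_or_eq_zero_of_mem_extremePoints {k : ℕ} {ρ : ℝ} {y : ι → ℝ}
    (hk : k ≤ Fintype.card ι) (hρ : 0 < ρ) (hy : y ∈ (budgetSet ι k ρ).extremePoints ℝ) :
    (∀ i, |y i| = ρ ∨ y i = 0) ∧ #{i | y i ≠ 0} = k := by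
  have hK := hy.1
  have hsum : ∑ i, |y i| = k * ρ :=
    hK.2.eq_or_lt.resolve_right fun hlt ↦ notMem_extremePoints_of_sum_abs_lt hk hρ.le hK hlt hy
  have hshape : ∀ i, |y i| = ρ ∨ y i = 0 := by
    by_contra! ⟨i, hiρ, hi0⟩
    refine (abs_eq_or_eq_zero_of_sum_abs_eq hρ hK hsum fun j hji ↦ ?_).elim hiρ hi0
    by_contra! ⟨hjρ, hj0⟩
    exact notMem_extremePoints_of_two_fractional hji.symm hK hi0 ((hK.1 i).lt_of_ne hiρ) hj0
      ((hK.1 j).lt_of_ne hjρ) hy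
  refine ⟨hshape, ?_⟩
  have := sum_abs_eq_card_mul univ fun i _ ↦ hshape i
  rw [hsum] at this
  exact_mod_cast (mul_right_cancel₀ hρ.ne' this).symm

theorem eq_of_mem_budgetSet_of_eqOn_support {k : ℕ} {ρ : ℝ} {x y : ι → ℝ}
    (hx : x ∈ budgetSet ι k ρ) (hshape : ∀ i, |y i| = ρ ∨ y i = 0) (hcard : #{i | y i ≠ 0} = k)
    (hxy : ∀ i, y i ≠ 0 → x i = y i) : x = y := by
  have hon : ∑ i with y i ≠ 0, |x i| = k * ρ := by
    rw [← hcard, sum_congr rfl fun i hi ↦ hxy i (mem_filter.1 hi).2 ▸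
      (hshape i).resolve_right (mem_filter.1 hi).2, sum_const, nsmul_eq_mul]
  have hoff : ∑ i with ¬y i ≠ 0, |x i| = 0 :=
    le_antisymm (by linarith [sum_filter_add_sum_filter_not univ (fun i ↦ y i ≠ 0) (|x ·|), hx.2])
      (sum_nonneg fun _ _ ↦ abs_nonneg _)
  funext i
  by_cases hi : y i = 0
  · rw [hi]
    exact abs_eq_zero.1 ((sum_eq_zero_iff_of_nonneg fun _ _ ↦ abs_nonneg _).1 hoff i (by simp [hi]))
  · exact hxy i hi

theorem mem_extremePoints_of_abs_eq_or_eq_zero {k : ℕ} {ρ : ℝ} {y : ι → ℝ} (hρ : 0 ≤ ρ)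
    (hshape : ∀ i, |y i| = ρ ∨ y i = 0) (hcard : #{i | y i ≠ 0} = k) :
    y ∈ (budgetSet ι k ρ).extremePoints ℝ := by
  refine ⟨⟨fun i ↦ ?_, ?_⟩, fun x₁ hx₁ x₂ hx₂ hseg ↦ ?_⟩
  · rcases hshape i with h | h
    exacts [h.le, by simpa [h] using hρ]
  · rw [sum_abs_eq_card_mul univ fun i _ ↦ hshape i, hcard]
  · refine eq_of_mem_budgetSet_of_eqOn_support hx₁ hshape hcard fun i hi ↦ ?_
    have hext : y i ∈ (Set.Icc (-ρ) ρ).extremePoints ℝ := by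
      rw [Set.extremePoints_Icc (by linarith)]
      rcases (abs_eq hρ).1 ((hshape i).resolve_right hi) with h | h <;> simp [h]
    exact hext.2 (abs_le.1 (hx₁.1 i)) (abs_le.1 (hx₂.1 i))
      (Pi.openSegment_subset x₁ x₂ hseg i (Set.mem_univ i))

variable [DecidableEq ι]

noncomputable def signedVertices (s : Finset ι) (ρ : ℝ) : Finset (ι → ℝ) :=
  Fintype.piFinset fun i ↦ if i ∈ s then {ρ, -ρ} else {0}

variable (ι) in
noncomputable def budgetVertices (k : ℕ) (ρ : ℝ) : Finset (ι → ℝ) :=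
  (powersetCard k univ).biUnion (signedVertices · ρ)

theorem mem_signedVertices {s : Finset ι} {ρ : ℝ} {y : ι → ℝ} (hρ : 0 < ρ) :
    y ∈ signedVertices s ρ ↔ (∀ i, |y i| = ρ ∨ y i = 0) ∧ ({i | y i ≠ 0} : Finset ι) = s := by
  simp only [signedVertices, Fintype.mem_piFinset]
  constructor
  · intro h
    refine ⟨fun i ↦ ?_, ?_⟩
    · have := h i
      split_ifs at this <;> simp_all
      rcases this with h' | h' <;> simp [h', abs_of_pos hρ]
    · ext i
      have := h i
      split_ifs at this with hi <;> simp_all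
      rcases this with h' | h' <;> simp [h', hρ.ne']
  · rintro ⟨hshape, rfl⟩ i
    by_cases hi : y i = 0
    · simp [hi]
    · simpa [hi] using (abs_eq hρ.le).1 ((hshape i).resolve_right hi)

theorem card_signedVertices (s : Finset ι) {ρ : ℝ} (hρ : ρ ≠ 0) :
    #(signedVertices s ρ) = 2 ^ #s := by
  have hpair : ρ ≠ -ρ := fun h ↦ hρ (by linarith)
  simp only [signedVertices, Fintype.card_piFinset, apply_ite Finset.card, card_pair hpair,
    card_singleton, prod_ite_mem, univ_inter, prod_const]

theorem mem_budgetVertices {k : ℕ} {ρ : ℝ} {y : ι → ℝ} (hρ : 0 < ρ) :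
    y ∈ budgetVertices ι k ρ ↔ (∀ i, |y i| = ρ ∨ y i = 0) ∧ #{i | y i ≠ 0} = k := by
  simp only [budgetVertices, mem_biUnion, mem_powersetCard, mem_signedVertices hρ]
  constructor
  · rintro ⟨s, ⟨-, rfl⟩, hshape, rfl⟩
    exact ⟨hshape, rfl⟩
  · rintro ⟨hshape, hcard⟩
    exact ⟨_, ⟨subset_univ _, hcard⟩, hshape, rfl⟩

theorem card_budgetVertices (k : ℕ) {ρ : ℝ} (hρ : 0 < ρ) :
    #(budgetVertices ι k ρ) = 2 ^ k * (Fintype.card ι).choose k := by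
  have hdisj : (powersetCard k (univ : Finset ι) : Set (Finset ι)).PairwiseDisjoint
      (signedVertices · ρ) := fun s _ t _ hst ↦ disjoint_left.2 fun y hs ht ↦
    hst (((mem_signedVertices hρ).1 hs).2.symm.trans ((mem_signedVertices hρ).1 ht).2)
  rw [budgetVertices, card_biUnion hdisj,
    sum_congr rfl fun s hs ↦ (mem_powersetCard.1 hs).2 ▸ card_signedVertices s hρ.ne',
    sum_const, card_powersetCard, card_univ, smul_eq_mul, mul_comm]

theorem extremePoints_budgetSet {k : ℕ} {ρ : ℝ} (hk : k ≤ Fintype.card ι) (hρ : 0 < ρ) :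
    (budgetSet ι k ρ).extremePoints ℝ = budgetVertices ι k ρ := by
  ext y
  rw [mem_coe, mem_budgetVertices hρ]
  exact ⟨abs_eq_or_eq_zero_of_mem_extremePoints hk hρ,
    fun ⟨hshape, hcard⟩ ↦ mem_extremePoints_of_abs_eq_or_eq_zero hρ.le hshape hcard⟩

end BudgetSet

theorem stmt14_general {n : ℕ} (nt : ℕ) (hntn : nt ≤ n) (ρ : ℝ) (hρ : 0 < ρ) :
    (∀ y ∈ Set.extremePoints ℝ
        {y : Fin n → ℝ | (∀ i, |y i| ≤ ρ) ∧ ∑ i, |y i| ≤ (nt : ℝ) * ρ},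
      (∀ i, y i = ρ ∨ y i = -ρ ∨ y i = 0) ∧ {i : Fin n | y i ≠ 0}.ncard = nt) ∧
    (Set.extremePoints ℝ
        {y : Fin n → ℝ | (∀ i, |y i| ≤ ρ) ∧ ∑ i, |y i| ≤ (nt : ℝ) * ρ}).ncard =
      2 ^ nt * n.choose nt := by
  have hk : nt ≤ Fintype.card (Fin n) := by simpa using hntn
  refine ⟨fun y hy ↦ ?_, ?_⟩
  · obtain ⟨hshape, hcard⟩ := abs_eq_or_eq_zero_of_mem_extremePoints hk hρ hy
    refine ⟨fun i ↦ (hshape i).elim (fun h ↦ ((abs_eq hρ.le).1 h).imp_right .inl) (.inr ∘ .inr),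
      ?_⟩
    rwa [← coe_filter_univ, Set.ncard_coe_finset]
  · change ((budgetSet (Fin n) nt ρ).extremePoints ℝ).ncard = _
    rw [extremePoints_budgetSet hk hρ, Set.ncard_coe_finset, card_budgetVertices nt hρ,
      Fintype.card_fin]

/-- Extreme points of the budget set {‖y‖_∞ ≤ ρ, ‖y‖₁ ≤ n_t ρ}: each has exactly
n_t coordinates equal to ±ρ and the rest 0, and there are 2^{n_t} · C(n, n_t)
of them. -/
theorem stmt14 {n : ℕ} (nt : ℕ) (hnt : 1 ≤ nt) (hntn : nt ≤ n) (ρ : ℝ) (hρ : 0 < ρ) :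
    (∀ y ∈ Set.extremePoints ℝ
        {y : Fin n → ℝ | (∀ i, |y i| ≤ ρ) ∧ ∑ i, |y i| ≤ (nt : ℝ) * ρ},
      (∀ i, y i = ρ ∨ y i = -ρ ∨ y i = 0) ∧ {i : Fin n | y i ≠ 0}.ncard = nt) ∧
    (Set.extremePoints ℝ
        {y : Fin n → ℝ | (∀ i, |y i| ≤ ρ) ∧ ∑ i, |y i| ≤ (nt : ℝ) * ρ}).ncard =
      2 ^ nt * n.choose nt :=
  stmt14_general nt hntn ρ hρ
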